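/- arXiv:1606.07823 — 2 statements merged into one kernel-verified Lean document; each statement's English description precedes it below -/
import Mathlib

section
/- For every natural number n ≥ 1, the set I₂ = {x ∈ ℤ/nℤ : n/6 < x ≤ n/3 or 2n/3 < x ≤ 5n/6} (with representatives in {0, ..., n-1}) is a sum-free subset of ℤ/nℤ. -/
theorem stmt_4 (n : ℕ) (hn : 1 ≤ n)
    (I₂ : Set (ZMod n))
    (hI₂ : I₂ = {x | ((n : ℚ) / 6 < x.val ∧ (x.val : ℚ) ≤ n / 3) ∨
        (2 * n / 3 < (x.val : ℚ) ∧ (x.val : ℚ) ≤ 5 * n / 6)}) :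
    ∀ a₁ ∈ I₂, ∀ a₂ ∈ I₂, ∀ a₃ ∈ I₂, a₁ + a₂ ≠ a₃ := by
  subst hI₂
  intro a₁ h₁ a₂ h₂ a₃ h₃ heq
  haveI : NeZero n := ⟨by omega⟩
  have hval : a₃.val = (a₁.val + a₂.val) % n := by rw [← heq, ZMod.val_add]
  have hA : a₁.val < n := ZMod.val_lt a₁
  have hB : a₂.val < n := ZMod.val_lt a₂
  have hnQ : (1 : ℚ) ≤ n := by exact_mod_cast hn
  rcases Nat.lt_or_ge (a₁.val + a₂.val) n with h | h
  · have hv : a₃.val = a₁.val + a₂.val := by rw [hval, Nat.mod_eq_of_lt h]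
    have hC : (a₃.val : ℚ) = a₁.val + a₂.val := by exact_mod_cast hv
    rcases h₁ with ⟨p₁, q₁⟩ | ⟨p₁, q₁⟩ <;> rcases h₂ with ⟨p₂, q₂⟩ | ⟨p₂, q₂⟩ <;>
      rcases h₃ with ⟨p₃, q₃⟩ | ⟨p₃, q₃⟩ <;> linarith
  · have hv : a₃.val = a₁.val + a₂.val - n := by
      rw [hval, Nat.mod_eq_sub_mod h, Nat.mod_eq_of_lt (by omega)]
    have hC : (a₃.val : ℚ) = a₁.val + a₂.val - n := by
      rw [hv, Nat.cast_sub h]; push_cast; ring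
    rcases h₁ with ⟨p₁, q₁⟩ | ⟨p₁, q₁⟩ <;> rcases h₂ with ⟨p₂, q₂⟩ | ⟨p₂, q₂⟩ <;>
      rcases h₃ with ⟨p₃, q₃⟩ | ⟨p₃, q₃⟩ <;> linarith
end

section
/- For every n ≥ 1 and every divisor d of n with 1 ≤ d < n, (4/7)·|dℤₙ ∩ I₁|/|dℤₙ| + (3/7)·|dℤₙ ∩ I₂|/|dℤₙ| ≥ 2/7, where dℤₙ = {0, d, 2d, ..., n-d} ⊆ ℤ/nℤ, I₁ = {x : n/3 < x ≤ 2n/3} and I₂ = {x : n/6 < x ≤ n/3 or 2n/3 < x ≤ 5n/6}. -/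
theorem stmt_5 (n d : ℕ) [NeZero n] (hd : d ∣ n) (hd1 : 1 ≤ d) (hdn : d < n)
    (dZ I₁ I₂ : Finset (ZMod n))
    (hdZ : dZ = (Finset.range (n / d)).image (fun m : ℕ => ((m * d : ℕ) : ZMod n)))
    (hI₁ : I₁ = Finset.univ.filter (fun x : ZMod n => (n : ℚ) / 3 < x.val ∧ (x.val : ℚ) ≤ 2 * n / 3))
    (hI₂ : I₂ = Finset.univ.filter (fun x : ZMod n =>
        ((n : ℚ) / 6 < x.val ∧ (x.val : ℚ) ≤ n / 3) ∨
        (2 * n / 3 < (x.val : ℚ) ∧ (x.val : ℚ) ≤ 5 * n / 6))) :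
    4 / 7 * ((dZ ∩ I₁).card : ℚ) / dZ.card + 3 / 7 * ((dZ ∩ I₂).card : ℚ) / dZ.card ≥ 2 / 7 := by
  subst hdZ hI₁ hI₂
  set k := n / d with hkdef
  have hdpos : 0 < d := hd1
  have hn : d * k = n := Nat.mul_div_cancel' hd
  have hk2 : 2 ≤ k := by
    by_contra h
    interval_cases k <;> omega
  set f : ℕ → ZMod n := fun m => ((m * d : ℕ) : ZMod n) with hf
  have hlt : ∀ m < k, m * d < n := by
    intro m hm
    calc m * d < k * d := (Nat.mul_lt_mul_right hdpos).mpr hm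
    _ = n := by rw [Nat.mul_comm]; exact hn
  have hval : ∀ m < k, (f m).val = m * d := fun m hm => ZMod.val_natCast_of_lt (hlt m hm)
  have hinj : Set.InjOn f (Finset.range k) := by
    intro a ha b hb hab
    simp only [Finset.coe_range, Set.mem_Iio] at ha hb
    have := congrArg ZMod.val hab
    rw [hval a ha, hval b hb] at this
    exact Nat.eq_of_mul_eq_mul_right hdpos this
  have hcard : ((Finset.range k).image f).card = k := by
    rw [Finset.card_image_of_injOn hinj, Finset.card_range]
  -- translate the two intersections into nat-predicate filters on range k
  have key : ∀ p : ZMod n → Prop, ∀ q : ℕ → Prop, [DecidablePred p] → [DecidablePred q] →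
      (∀ m < k, p (f m) ↔ q m) →
      ((Finset.range k).image f ∩ Finset.univ.filter p).card
        = ((Finset.range k).filter q).card := by
    intro p q _ _ hpq
    have h1 : (Finset.range k).image f ∩ Finset.univ.filter p
        = ((Finset.range k).filter q).image f := by
      ext x
      simp only [Finset.mem_inter, Finset.mem_image, Finset.mem_filter, Finset.mem_range,
        Finset.mem_univ, true_and]
      constructor
      · rintro ⟨⟨m, hm, rfl⟩, hp⟩
        exact ⟨m, ⟨hm, (hpq m hm).mp hp⟩, rfl⟩
      · rintro ⟨m, ⟨hm, hq⟩, rfl⟩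
        exact ⟨⟨m, hm, rfl⟩, (hpq m hm).mpr hq⟩
    rw [h1, Finset.card_image_of_injOn (hinj.mono (by
      intro x hx
      simp only [Finset.coe_filter, Set.mem_setOf_eq] at hx
      simpa using hx.1))]
  have hmlt : ∀ a b : ℕ, d * a < d * b ↔ a < b := fun a b => Nat.mul_lt_mul_left hdpos
  have hmle : ∀ a b : ℕ, d * a ≤ d * b ↔ a ≤ b := fun a b => by
    constructor
    · intro h; exact Nat.le_of_mul_le_mul_left h hdpos
    · intro h; exact Nat.mul_le_mul_left d h
  have cast1 : ∀ m < k, ((n : ℚ) / 3 < (f m).val ∧ ((f m).val : ℚ) ≤ 2 * n / 3)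
      ↔ (k < 3 * m ∧ 3 * m ≤ 2 * k) := by
    intro m hm
    rw [hval m hm]
    rw [div_lt_iff₀ (by norm_num : (0:ℚ) < 3), le_div_iff₀ (by norm_num : (0:ℚ) < 3)]
    rw [show ((m*d:ℕ):ℚ)*3 = ((m*d*3 : ℕ):ℚ) by push_cast; ring,
        show (2:ℚ)*n = ((2*n : ℕ):ℚ) by push_cast; ring, Nat.cast_lt, Nat.cast_le]
    rw [← hn, show m*d*3 = d*(3*m) by ring, show d*k = d*k from rfl,
        show 2*(d*k) = d*(2*k) by ring, hmlt, hmle]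
  have cast2 : ∀ m < k, (((n : ℚ) / 6 < (f m).val ∧ ((f m).val : ℚ) ≤ n / 3) ∨
        (2 * n / 3 < ((f m).val : ℚ) ∧ ((f m).val : ℚ) ≤ 5 * n / 6))
      ↔ ((k < 6 * m ∧ 3 * m ≤ k) ∨ (2 * k < 3 * m ∧ 6 * m ≤ 5 * k)) := by
    intro m hm
    rw [hval m hm]
    rw [div_lt_iff₀ (by norm_num : (0:ℚ) < 6), le_div_iff₀ (by norm_num : (0:ℚ) < 3),
        div_lt_iff₀ (by norm_num : (0:ℚ) < 3), le_div_iff₀ (by norm_num : (0:ℚ) < 6)]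
    rw [show ((m*d:ℕ):ℚ)*6 = ((m*d*6 : ℕ):ℚ) by push_cast; ring,
        show ((m*d:ℕ):ℚ)*3 = ((m*d*3 : ℕ):ℚ) by push_cast; ring,
        show (2:ℚ)*n = ((2*n : ℕ):ℚ) by push_cast; ring,
        show (5:ℚ)*n = ((5*n : ℕ):ℚ) by push_cast; ring,
        Nat.cast_lt, Nat.cast_le, Nat.cast_lt, Nat.cast_le]
    rw [← hn, show m*d*6 = d*(6*m) by ring, show m*d*3 = d*(3*m) by ring,
        show 2*(d*k) = d*(2*k) by ring, show 5*(d*k) = d*(5*k) by ring,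
        hmlt, hmle, hmlt, hmle]
  have hA : ((Finset.range k).image f ∩ Finset.univ.filter
      (fun x : ZMod n => (n : ℚ) / 3 < x.val ∧ (x.val : ℚ) ≤ 2 * n / 3)).card
      = 2*k/3 - k/3 := by
    rw [key _ (fun m => k < 3 * m ∧ 3 * m ≤ 2 * k) cast1]
    have : (Finset.range k).filter (fun m => k < 3 * m ∧ 3 * m ≤ 2 * k)
        = Finset.Ioc (k/3) (2*k/3) := by
      ext m
      simp only [Finset.mem_filter, Finset.mem_range, Finset.mem_Ioc]
      omega
    rw [this, Nat.card_Ioc]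
  have hB : ((Finset.range k).image f ∩ Finset.univ.filter
      (fun x : ZMod n => ((n : ℚ) / 6 < x.val ∧ (x.val : ℚ) ≤ n / 3) ∨
        (2 * n / 3 < (x.val : ℚ) ∧ (x.val : ℚ) ≤ 5 * n / 6))).card
      = (k/3 - k/6) + (5*k/6 - 2*k/3) := by
    rw [key _ (fun m => (k < 6 * m ∧ 3 * m ≤ k) ∨ (2 * k < 3 * m ∧ 6 * m ≤ 5 * k)) cast2]
    have h1 : (Finset.range k).filter
        (fun m => (k < 6 * m ∧ 3 * m ≤ k) ∨ (2 * k < 3 * m ∧ 6 * m ≤ 5 * k))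
        = Finset.Ioc (k/6) (k/3) ∪ Finset.Ioc (2*k/3) (5*k/6) := by
      ext m
      simp only [Finset.mem_filter, Finset.mem_range, Finset.mem_union, Finset.mem_Ioc]
      omega
    rw [h1, Finset.card_union_of_disjoint, Nat.card_Ioc, Nat.card_Ioc]
    rw [Finset.disjoint_left]
    intro m hm1 hm2
    simp only [Finset.mem_Ioc] at hm1 hm2
    omega
  rw [hA, hB, hcard]
  have hkey0 : ∀ K : ℕ, 2 ≤ K →
      4 * (2*K/3 - K/3) + 3 * ((K/3 - K/6) + (5*K/6 - 2*K/3)) ≥ 2 * K := by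
    intro K hK
    obtain ⟨q, r, hr, rfl⟩ : ∃ q r, r < 6 ∧ K = 6*q + r :=
      ⟨K/6, K%6, Nat.mod_lt _ (by norm_num), (Nat.div_add_mod K 6).symm⟩
    interval_cases r <;> omega
  have hkey := hkey0 k hk2
  have hkpos : (0:ℚ) < k := by exact_mod_cast (by omega : 0 < k)
  set A : ℕ := 2*k/3 - k/3
  set B : ℕ := (k/3 - k/6) + (5*k/6 - 2*k/3)
  have hq : (2:ℚ) * k ≤ 4 * A + 3 * B := by exact_mod_cast hkey
  rw [ge_iff_le, show (4:ℚ)/7 * A / k + 3/7 * B / k = (4*A + 3*B)/(7*k) by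
    field_simp]
  rw [div_le_div_iff₀ (by norm_num) (by positivity)]
  linarith
end
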